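/- Let G=(V,E,W) be a finite weighted undirected graph with |V| ≥ 2 and d_i > 0 for every vertex i. Then there exists a binary partitioning tree T* of G (a partitioning tree in which every internal node has exactly two children) such that H^{T*}(G) ≤ H^T(G) for every partitioning tree T of G; that is, the minimum structural entropy of G over all partitioning trees is attained by a binary partitioning tree. -/

import Mathlib

open Finset

variable {V : Type*} [Fintype V] [DecidableEq V]

/-- Degree of a vertex in a finite weighted undirected graph. -/
noncomputable def deg (W : V → V → ℝ) (i : V) : ℝ := ∑ j, W i j

/-- Volume of a vertex subset. -/
noncomputable def vol (W : V → V → ℝ) (S : Finset V) : ℝ := ∑ i ∈ S, deg W i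

/-- Cut of a vertex subset. -/
noncomputable def cut (W : V → V → ℝ) (S : Finset V) : ℝ := ∑ i ∈ S, ∑ j ∈ Sᶜ, W i j

/-- A partitioning tree of a graph on vertex set `V`. -/
structure PartTree (V : Type*) [Fintype V] [DecidableEq V] where
  Node : Type
  [fin : Fintype Node]
  [deq : DecidableEq Node]
  root : Node
  parent : Node → Node
  depth : Node → ℕ
  depth_root : depth root = 0
  depth_parent : ∀ α, α ≠ root → depth α = depth (parent α) + 1
  label : Node → Finset V
  label_root : label root = Finset.univ
  label_nonempty : ∀ α, (label α).Nonempty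
  label_children : ∀ β : Node,
    (Finset.univ.filter (fun α => α ≠ root ∧ parent α = β)).Nonempty →
    label β = (Finset.univ.filter (fun α => α ≠ root ∧ parent α = β)).biUnion label
  label_disjoint : ∀ α β : Node, α ≠ root → β ≠ root → parent α = parent β → α ≠ β →
    Disjoint (label α) (label β)
  leaf_label : ∀ α : Node,
    Finset.univ.filter (fun γ => γ ≠ root ∧ parent γ = α) = ∅ → ∃ v : V, label α = {v}
  leaf_unique : ∀ v : V, ∃! α : Node,
    Finset.univ.filter (fun γ => γ ≠ root ∧ parent γ = α) = ∅ ∧ label α = {v}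

attribute [instance] PartTree.fin PartTree.deq

/-- Children of a node. -/
def PartTree.children (T : PartTree V) (β : T.Node) : Finset T.Node :=
  Finset.univ.filter (fun α => α ≠ T.root ∧ T.parent α = β)

/-- Structural entropy of the graph with weights `W` on the partitioning tree `T`. -/
noncomputable def SE (W : V → V → ℝ) (T : PartTree V) : ℝ :=
  ∑ α ∈ Finset.univ.filter (fun α => α ≠ T.root),
    -(cut W (T.label α) / vol W Finset.univ) *
      Real.logb 2 (vol W (T.label α) / vol W (T.label (T.parent α)))

/-- One-dimensional structural entropy. -/
noncomputable def H1 (W : V → V → ℝ) : ℝ :=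
  -∑ i : V, (deg W i / vol W Finset.univ) * Real.logb 2 (deg W i / vol W Finset.univ)

/-- Conductance of the graph: minimum over nonempty proper vertex subsets. -/
noncomputable def conductance (W : V → V → ℝ) : ℝ :=
  ⨅ S : {S : Finset V // S.Nonempty ∧ S ≠ Finset.univ},
    cut W S.1 / min (vol W S.1) (vol W (S.1)ᶜ)

/-- A partitioning tree is binary if every internal node has exactly two children. -/
def PartTree.isBinary (T : PartTree V) : Prop :=
  ∀ β : T.Node, (T.children β).Nonempty → (T.children β).card = 2

set_option linter.unusedSectionVars false
section Basic

variable (W : V → V → ℝ)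

/-- The entropy contribution of a node with label `A` whose parent has label `P`. -/
noncomputable def ent (A P : Finset V) : ℝ :=
  -(cut W A / vol W Finset.univ) * Real.logb 2 (vol W A / vol W P)

lemma vol_pos (hdeg : ∀ i, 0 < deg W i) {S : Finset V} (hS : S.Nonempty) :
    0 < vol W S :=
  Finset.sum_pos (fun i _ => hdeg i) hS

lemma vol_mono (hdeg : ∀ i, 0 < deg W i) {S T : Finset V} (h : S ⊆ T) :
    vol W S ≤ vol W T :=
  Finset.sum_le_sum_of_subset_of_nonneg h (fun i _ _ => (hdeg i).le)

lemma cut_nonneg (hnonneg : ∀ i j, 0 ≤ W i j) (S : Finset V) : 0 ≤ cut W S :=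
  Finset.sum_nonneg fun i _ => Finset.sum_nonneg fun j _ => hnonneg i j

lemma ent_self (S : Finset V) : ent W S S = 0 := by
  rcases eq_or_ne (vol W S) 0 with h | h
  · simp [ent, h]
  · simp [ent, div_self h]

lemma ent_eq (hdeg : ∀ i, 0 < deg W i) {A P : Finset V} (hA : A.Nonempty)
    (hP : P.Nonempty) :
    ent W A P = (cut W A / vol W Finset.univ) * Real.logb 2 (vol W P / vol W A) := by
  have h1 : vol W A ≠ 0 := (vol_pos W hdeg hA).ne'
  have h2 : vol W P ≠ 0 := (vol_pos W hdeg hP).ne'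
  have : vol W A / vol W P = (vol W P / vol W A)⁻¹ := by
    field_simp
  rw [ent, this, Real.logb_inv]; ring

lemma ent_nonneg (hnonneg : ∀ i j, 0 ≤ W i j) (hdeg : ∀ i, 0 < deg W i)
    {A P : Finset V} (hA : A.Nonempty) (hAP : A ⊆ P) : 0 ≤ ent W A P := by
  have hP : P.Nonempty := hA.mono hAP
  rw [ent_eq W hdeg hA hP]
  have hlog : 0 ≤ Real.logb 2 (vol W P / vol W A) :=
    Real.logb_nonneg one_lt_two ((one_le_div (vol_pos W hdeg hA)).2 (vol_mono W hdeg hAP))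
  have hc : 0 ≤ cut W A / vol W Finset.univ :=
    div_nonneg (cut_nonneg W hnonneg A)
      (Finset.sum_nonneg fun i _ => (hdeg i).le)
  positivity

/-- Splitting the log ratio through an intermediate set. -/
lemma ent_split (hdeg : ∀ i, 0 < deg W i) {A D S : Finset V} (hA : A.Nonempty)
    (hD : D.Nonempty) (hS : S.Nonempty) :
    ent W A S = ent W A D + (cut W A / vol W Finset.univ) *
      Real.logb 2 (vol W S / vol W D) := by
  have h1 : vol W A ≠ 0 := (vol_pos W hdeg hA).ne'
  have h2 : vol W D ≠ 0 := (vol_pos W hdeg hD).ne'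
  have h3 : vol W S ≠ 0 := (vol_pos W hdeg hS).ne'
  have key : vol W A / vol W S = (vol W A / vol W D) * (vol W D / vol W S) := by
    field_simp
  have hDS : vol W D / vol W S = (vol W S / vol W D)⁻¹ := by field_simp
  rw [ent, key, Real.logb_mul (by positivity) (by positivity), hDS, Real.logb_inv, ent]
  ring

/-- Subadditivity of the cut over a disjoint union. -/
lemma cut_biUnion_le (hnonneg : ∀ i j, 0 ≤ W i j) (P : Finset (Finset V))
    (hdisj : (P : Set (Finset V)).Pairwise Disjoint) :
    cut W (P.biUnion id) ≤ ∑ A ∈ P, cut W A := by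
  rw [cut, Finset.sum_biUnion]
  · refine Finset.sum_le_sum fun A hA => Finset.sum_le_sum fun i _ => ?_
    refine Finset.sum_le_sum_of_subset_of_nonneg ?_ (fun j _ _ => hnonneg i j)
    intro j hj
    simp only [Finset.mem_compl] at hj ⊢
    intro hjA
    exact hj (Finset.mem_biUnion.2 ⟨A, hA, hjA⟩)
  · intro a ha b hb hab
    exact hdisj ha hb hab

end Basic
set_option maxHeartbeats 1000000
section OPTdef

/-- Nonempty proper subsets of `S`. -/
def pns (S : Finset V) : Finset (Finset V) :=
  S.powerset.filter fun A => A.Nonempty ∧ A ≠ S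

omit [Fintype V] in
lemma mem_pns {S A : Finset V} : A ∈ pns S ↔ A ⊆ S ∧ A.Nonempty ∧ A ≠ S := by
  simp [pns]

omit [Fintype V] in
lemma pns_nonempty {S : Finset V} (h : 2 ≤ S.card) : (pns S).Nonempty := by
  obtain ⟨v, hv⟩ := Finset.card_pos.mp (show 0 < S.card by omega)
  refine ⟨{v}, mem_pns.2 ⟨Finset.singleton_subset_iff.2 hv, Finset.singleton_nonempty v, ?_⟩⟩
  intro hs
  rw [← hs, Finset.card_singleton] at h
  omega

/-- Minimum structural entropy cost of a binary partitioning tree on the subset `S`,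
measured with global cuts and volumes. -/
noncomputable def OPT (W : V → V → ℝ) (S : Finset V) : ℝ :=
  if h : S.card ≤ 1 then 0
  else
    ((pns S).attach.image fun A =>
      ent W A.1 S + ent W (S \ A.1) S + OPT W A.1 + OPT W (S \ A.1)).min'
      (Finset.Nonempty.image ((pns_nonempty (by omega)).attach) _)
termination_by S.card
decreasing_by
  all_goals
    first
    | exact Finset.card_lt_card (Finset.ssubset_iff_subset_ne.2
        ⟨(mem_pns.1 A.2).1, (mem_pns.1 A.2).2.2⟩)
    | exact Finset.card_lt_card (Finset.sdiff_ssubset (mem_pns.1 A.2).1 (mem_pns.1 A.2).2.1)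

set_option maxHeartbeats 1000000 in
lemma OPT_of_card_le (W : V → V → ℝ) {S : Finset V} (h : S.card ≤ 1) : OPT W S = 0 := by
  rw [OPT, dif_pos h]

lemma OPT_le (W : V → V → ℝ) {S A : Finset V} (hA : A ∈ pns S) :
    OPT W S ≤ ent W A S + ent W (S \ A) S + OPT W A + OPT W (S \ A) := by
  have h2 : ¬ S.card ≤ 1 := by
    have h := mem_pns.1 hA
    have h1 := Finset.card_lt_card (Finset.ssubset_iff_subset_ne.2 ⟨h.1, h.2.2⟩)
    have h0 := Finset.card_pos.2 h.2.1
    omega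
  rw [OPT, dif_neg h2]
  exact Finset.min'_le _ _ (Finset.mem_image_of_mem _ (Finset.mem_attach _ ⟨A, hA⟩))

lemma OPT_spec (W : V → V → ℝ) {S : Finset V} (h : 2 ≤ S.card) :
    ∃ A, A ∈ pns S ∧
      OPT W S = ent W A S + ent W (S \ A) S + OPT W A + OPT W (S \ A) := by
  have h2 : ¬ S.card ≤ 1 := by omega
  have hmem := Finset.min'_mem
    (((pns S).attach.image fun A =>
      ent W A.1 S + ent W (S \ A.1) S + OPT W A.1 + OPT W (S \ A.1)))
    (Finset.Nonempty.image ((pns_nonempty h).attach) _)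
  obtain ⟨A, _, hAeq⟩ := Finset.mem_image.1 hmem
  exact ⟨A.1, A.2, by rw [OPT, dif_neg h2, ← hAeq]⟩

end OPTdef
section Partition

variable (W : V → V → ℝ)

lemma OPT_le_partition (hnonneg : ∀ i j, 0 ≤ W i j) (hdeg : ∀ i, 0 < deg W i) :
    ∀ (n : ℕ) (P : Finset (Finset V)) (S : Finset V), P.card = n → P.Nonempty →
      (∀ A ∈ P, A.Nonempty) → (↑P : Set (Finset V)).Pairwise Disjoint →
      P.biUnion id = S →
      OPT W S ≤ ∑ A ∈ P, (ent W A S + OPT W A) := by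
  intro n
  induction n using Nat.strong_induction_on with
  | _ n ih =>
    intro P S hcard hPne hne hdisj hU
    rcases eq_or_lt_of_le (Finset.one_le_card.2 hPne) with h1 | h2
    · -- single part : P = {S}
      obtain ⟨A, hA⟩ := Finset.card_eq_one.1 h1.symm
      subst hA
      rw [Finset.singleton_biUnion, id] at hU
      subst hU
      rw [Finset.sum_singleton, ent_self]
      linarith
    · -- at least two parts
      obtain ⟨A₀, hA₀⟩ := hPne
      set P' := P.erase A₀ with hP'
      have hP'card : P'.card = P.card - 1 := Finset.card_erase_of_mem hA₀
      have hP'ne : P'.Nonempty := Finset.card_pos.1 (by omega)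
      have hA₀S : A₀ ⊆ S := hU ▸ Finset.subset_biUnion_of_mem id hA₀
      set D := S \ A₀ with hDdef
      have hD : P'.biUnion id = D := by
        ext x
        simp only [Finset.mem_biUnion, id, hDdef, Finset.mem_sdiff]
        constructor
        · rintro ⟨B, hB, hxB⟩
          have hBP : B ∈ P := Finset.mem_of_mem_erase hB
          refine ⟨hU ▸ Finset.mem_biUnion.2 ⟨B, hBP, hxB⟩, fun hxA₀ => ?_⟩
          exact (Finset.disjoint_left.1
            (hdisj (Finset.mem_coe.2 hBP) (Finset.mem_coe.2 hA₀)
              (Finset.ne_of_mem_erase hB))) hxB hxA₀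
        · rintro ⟨hxS, hxA₀⟩
          obtain ⟨B, hB, hxB⟩ := Finset.mem_biUnion.1 (hU ▸ hxS : x ∈ P.biUnion id)
          exact ⟨B, Finset.mem_erase.2 ⟨fun h => hxA₀ (h ▸ hxB), hB⟩, hxB⟩
      have hDne : D.Nonempty := by
        obtain ⟨B, hB⟩ := hP'ne
        obtain ⟨x, hx⟩ := hne B (Finset.mem_of_mem_erase hB)
        exact ⟨x, hD ▸ Finset.mem_biUnion.2 ⟨B, hB, hx⟩⟩
      have hSne : S.Nonempty := (hne A₀ hA₀).mono hA₀S
      have hUne : (Finset.univ : Finset V).Nonempty :=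
        ⟨hSne.choose, Finset.mem_univ _⟩
      have hvolU : 0 < vol W Finset.univ := vol_pos W hdeg hUne
      have hA₀pns : A₀ ∈ pns S := by
        refine mem_pns.2 ⟨hA₀S, hne A₀ hA₀, fun h => ?_⟩
        rw [h, sdiff_self] at hDdef
        exact hDne.ne_empty (hDdef ▸ rfl)
      have step1 : OPT W S ≤ ent W A₀ S + ent W D S + OPT W A₀ + OPT W D :=
        OPT_le W hA₀pns
      have hIH : OPT W D ≤ ∑ B ∈ P', (ent W B D + OPT W B) := by
        refine ih P'.card (by omega) P' D rfl hP'ne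
          (fun B hB => hne B (Finset.mem_of_mem_erase hB))
          (hdisj.mono (by simp [hP', Finset.coe_subset, Finset.erase_subset])) hD
      -- the telescoping bound
      set L := Real.logb 2 (vol W S / vol W D) with hL
      have hDsubS : D ⊆ S := Finset.sdiff_subset
      have hLnn : 0 ≤ L :=
        Real.logb_nonneg one_lt_two
          ((one_le_div (vol_pos W hdeg hDne)).2 (vol_mono W hdeg hDsubS))
      have e1 : ent W D S = (cut W D / vol W Finset.univ) * L :=
        ent_eq W hdeg hDne hSne
      have e3 : cut W D ≤ ∑ B ∈ P', cut W B := by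
        have := cut_biUnion_le W hnonneg P'
          (hdisj.mono (by simp [hP', Finset.coe_subset, Finset.erase_subset]))
        rwa [hD] at this
      have key : ent W D S + ∑ B ∈ P', ent W B D ≤ ∑ B ∈ P', ent W B S := by
        have e2 : ∀ B ∈ P', ent W B S = ent W B D + (cut W B / vol W Finset.univ) * L :=
          fun B hB => ent_split W hdeg (hne B (Finset.mem_of_mem_erase hB)) hDne hSne
        rw [Finset.sum_congr rfl e2, Finset.sum_add_distrib]
        have : ent W D S ≤ ∑ B ∈ P', (cut W B / vol W Finset.univ) * L := by
          rw [e1, ← Finset.sum_mul, ← Finset.sum_div]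
          have hdivle : cut W D / vol W Finset.univ ≤
              (∑ B ∈ P', cut W B) / vol W Finset.univ := by gcongr
          exact mul_le_mul_of_nonneg_right hdivle hLnn
        linarith
      have hsum : ∑ A ∈ P, (ent W A S + OPT W A) =
          (ent W A₀ S + OPT W A₀) + ∑ B ∈ P', (ent W B S + OPT W B) :=
        (Finset.add_sum_erase P _ hA₀).symm
      have hsum' : ∑ B ∈ P', (ent W B D + OPT W B) =
          ∑ B ∈ P', ent W B D + ∑ B ∈ P', OPT W B := Finset.sum_add_distrib
      have hsum'' : ∑ B ∈ P', (ent W B S + OPT W B) =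
          ∑ B ∈ P', ent W B S + ∑ B ∈ P', OPT W B := Finset.sum_add_distrib
      rw [hsum, hsum'']
      rw [hsum'] at hIH
      linarith
end Partition
section BTdef

/-- Abstract binary trees with vertex leaves. -/
inductive BT (V : Type*) where
  | leaf : V → BT V
  | node : BT V → BT V → BT V

variable {W : V → V → ℝ}

namespace BT

/-- Set of leaves below a tree. -/
def lab : BT V → Finset V
  | .leaf v => {v}
  | .node a b => a.lab ∪ b.lab

/-- Well-formedness: the two subtrees at each node have disjoint leaf sets. -/
def Good : BT V → Prop
  | .leaf _ => True
  | .node a b => Disjoint a.lab b.lab ∧ a.Good ∧ b.Good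

/-- The family of labels of all nodes of the tree. -/
def fam : BT V → Finset (Finset V)
  | .leaf v => {({v} : Finset V)}
  | .node a b => insert (a.lab ∪ b.lab) (a.fam ∪ b.fam)

/-- Parent label of a given label (junk value on junk input). -/
def parentOf : BT V → Finset V → Finset V
  | .leaf v, _ => {v}
  | .node a b, S =>
    if S = a.lab ∨ S = b.lab then a.lab ∪ b.lab
    else if S ⊆ a.lab then a.parentOf S else b.parentOf S

/-- Depth of a given label (junk value on junk input). -/
def depthOf : BT V → Finset V → ℕ
  | .leaf _, _ => 0
  | .node a b, S =>
    if S = a.lab ∪ b.lab then 0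
    else if S ⊆ a.lab then a.depthOf S + 1
    else if S ⊆ b.lab then b.depthOf S + 1 else 0

/-- Labels of the children of the node with a given label. -/
def childPair : BT V → Finset V → Finset (Finset V)
  | .leaf _, _ => ∅
  | .node a b, S =>
    if S = a.lab ∪ b.lab then {a.lab, b.lab}
    else if S ⊆ a.lab then a.childPair S else b.childPair S

/-- Total entropy cost of a tree, with global cuts and volumes. -/
noncomputable def cost (W : V → V → ℝ) : BT V → ℝ
  | .leaf _ => 0
  | .node a b => ent W a.lab (a.lab ∪ b.lab) + ent W b.lab (a.lab ∪ b.lab)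
      + a.cost W + b.cost W

omit [Fintype V] in
lemma lab_nonempty : ∀ t : BT V, t.lab.Nonempty
  | .leaf v => Finset.singleton_nonempty v
  | .node a b => (lab_nonempty a).mono (by simp [lab, Finset.subset_union_left])

lemma mem_fam_subset : ∀ (t : BT V) {S}, S ∈ t.fam → S ⊆ t.lab := by
  intro t
  induction t with
  | leaf v => intro S hS; rw [fam, Finset.mem_singleton] at hS; simp [hS, lab]
  | node a b iha ihb =>
    intro S hS
    rw [fam, Finset.mem_insert, Finset.mem_union] at hS
    rcases hS with h | h | h
    · simp [h, lab]
    · exact (iha h).trans (by simp [lab])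
    · exact (ihb h).trans (by simp [lab])

lemma mem_fam_nonempty : ∀ (t : BT V) {S}, S ∈ t.fam → S.Nonempty := by
  intro t
  induction t with
  | leaf v => intro S hS; rw [fam, Finset.mem_singleton] at hS; simp [hS]
  | node a b iha ihb =>
    intro S hS
    rw [fam, Finset.mem_insert, Finset.mem_union] at hS
    rcases hS with h | h | h
    · rw [h]; exact (lab_nonempty a).mono Finset.subset_union_left
    · exact iha h
    · exact ihb h

lemma lab_mem_fam : ∀ t : BT V, t.lab ∈ t.fam
  | .leaf v => by simp [fam, lab]
  | .node a b => by simp [fam, lab]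

/-- In a good node, the label of an a-side family member is not the whole label. -/
lemma famA_ne_lab {a b : BT V} (hd : Disjoint a.lab b.lab) {S : Finset V}
    (hS : S ∈ a.fam) : S ≠ a.lab ∪ b.lab := by
  intro h
  have h1 : S ⊆ a.lab := mem_fam_subset a hS
  have h2 : b.lab ⊆ a.lab := le_trans (le_trans Finset.subset_union_right h.ge) h1
  obtain ⟨x, hx⟩ := lab_nonempty b
  exact Finset.disjoint_right.1 hd hx (h2 hx)

lemma famA_not_subset {a b : BT V} (hd : Disjoint a.lab b.lab) {S : Finset V}
    (hS : S ∈ a.fam) : ¬ S ⊆ b.lab := by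
  intro h
  obtain ⟨x, hx⟩ := mem_fam_nonempty a hS
  exact Finset.disjoint_left.1 hd (mem_fam_subset a hS hx) (h hx)

lemma famA_ne_labB {a b : BT V} (hd : Disjoint a.lab b.lab) {S : Finset V}
    (hS : S ∈ a.fam) : S ≠ b.lab := fun h => famA_not_subset hd hS (h ▸ le_rfl)

lemma fam_disjoint {a b : BT V} (hd : Disjoint a.lab b.lab) :
    ∀ {S}, S ∈ a.fam → S ∉ b.fam := by
  intro S hSa hSb
  exact famA_not_subset hd hSa (mem_fam_subset b hSb)

/-- Simplification of `parentOf` at a node, for a-side members. -/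
lemma parentOf_nodeA {a b : BT V} (hd : Disjoint a.lab b.lab) {S : Finset V}
    (hS : S ∈ a.fam) :
    (BT.node a b).parentOf S = if S = a.lab then a.lab ∪ b.lab else a.parentOf S := by
  rw [parentOf]
  by_cases h : S = a.lab
  · rw [if_pos (Or.inl h), if_pos h]
  · rw [if_neg (by rintro (h' | h'); exact h h'; exact famA_ne_labB hd hS h'), if_neg h,
      if_pos (mem_fam_subset a hS)]

lemma parentOf_nodeB {a b : BT V} (hd : Disjoint a.lab b.lab) {S : Finset V}
    (hS : S ∈ b.fam) :
    (BT.node a b).parentOf S = if S = b.lab then a.lab ∪ b.lab else b.parentOf S := by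
  rw [parentOf]
  by_cases h : S = b.lab
  · rw [if_pos (Or.inr h), if_pos h]
  · have hne1 : S ≠ a.lab := famA_ne_labB hd.symm hS
    rw [if_neg (by rintro (h' | h') <;> [exact hne1 h'; exact h h']), if_neg h,
      if_neg (famA_not_subset hd.symm hS)]

lemma parentOf_mem : ∀ (t : BT V) (S : Finset V), t.parentOf S ∈ t.fam := by
  intro t
  induction t with
  | leaf v => intro S; simp [parentOf, fam]
  | node a b iha ihb =>
    intro S
    rw [parentOf]
    split
    · exact lab_mem_fam _
    · split
      · exact Finset.mem_insert.2 (Or.inr (Finset.mem_union_left _ (iha S)))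
      · exact Finset.mem_insert.2 (Or.inr (Finset.mem_union_right _ (ihb S)))

lemma childPair_nodeA {a b : BT V} (hd : Disjoint a.lab b.lab) {S : Finset V}
    (hS : S ∈ a.fam) : (BT.node a b).childPair S = a.childPair S := by
  rw [childPair, if_neg (famA_ne_lab hd hS), if_pos (mem_fam_subset a hS)]

lemma childPair_nodeB {a b : BT V} (hd : Disjoint a.lab b.lab) {S : Finset V}
    (hS : S ∈ b.fam) : (BT.node a b).childPair S = b.childPair S := by
  rw [childPair, if_neg (famA_ne_lab (a:=b) hd.symm hS ∘ fun h => h.trans (Finset.union_comm _ _)),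
    if_neg (famA_not_subset hd.symm hS)]

lemma depthOf_lab : ∀ t : BT V, t.depthOf t.lab = 0
  | .leaf v => by rw [depthOf]
  | .node a b => by rw [depthOf, lab, if_pos rfl]

lemma childPair_subset_fam : ∀ (t : BT V) (S : Finset V), t.childPair S ⊆ t.fam := by
  intro t
  induction t with
  | leaf v => intro S; rw [childPair]; exact Finset.empty_subset _
  | node a b iha ihb =>
    intro S
    rw [childPair]
    split
    · intro T hT
      rcases Finset.mem_insert.1 hT with h | h
      · exact Finset.mem_insert.2 (Or.inr (Finset.mem_union_left _ (h ▸ lab_mem_fam a)))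
      · rw [Finset.mem_singleton] at h
        exact Finset.mem_insert.2 (Or.inr (Finset.mem_union_right _ (h ▸ lab_mem_fam b)))
    · split
      · exact (iha S).trans (fun T hT => Finset.mem_insert.2 (Or.inr (Finset.mem_union_left _ hT)))
      · exact (ihb S).trans (fun T hT => Finset.mem_insert.2 (Or.inr (Finset.mem_union_right _ hT)))

end BT
end BTdef
namespace BT

lemma famB_ne_lab {a b : BT V} (hd : Disjoint a.lab b.lab) {S : Finset V}
    (hS : S ∈ b.fam) : S ≠ a.lab ∪ b.lab := by
  rw [Finset.union_comm]
  exact famA_ne_lab hd.symm hS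

lemma depthOf_nodeA {a b : BT V} (hd : Disjoint a.lab b.lab) {S : Finset V}
    (hS : S ∈ a.fam) : (BT.node a b).depthOf S = a.depthOf S + 1 := by
  rw [depthOf, if_neg (famA_ne_lab hd hS), if_pos (mem_fam_subset a hS)]

lemma depthOf_nodeB {a b : BT V} (hd : Disjoint a.lab b.lab) {S : Finset V}
    (hS : S ∈ b.fam) : (BT.node a b).depthOf S = b.depthOf S + 1 := by
  rw [depthOf, if_neg (famB_ne_lab hd hS), if_neg (famA_not_subset hd.symm hS),
    if_pos (mem_fam_subset b hS)]

omit [Fintype V] in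
lemma lab_node (a b : BT V) : (BT.node a b).lab = a.lab ∪ b.lab := rfl

omit [Fintype V] in
lemma fam_node (a b : BT V) :
    (BT.node a b).fam = insert (a.lab ∪ b.lab) (a.fam ∪ b.fam) := rfl

lemma depthOf_parent : ∀ (t : BT V), t.Good → ∀ {T}, T ∈ t.fam → T ≠ t.lab →
    t.depthOf T = t.depthOf (t.parentOf T) + 1 := by
  intro t
  induction t with
  | leaf v =>
    intro _ T hT hne
    rw [fam, Finset.mem_singleton] at hT
    exact absurd hT hne
  | node a b iha ihb =>
    intro hg T hT hne
    obtain ⟨hd, hga, hgb⟩ := hg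
    rw [fam_node, Finset.mem_insert, Finset.mem_union] at hT
    rcases hT with h | h | h
    · exact absurd h hne
    · rw [depthOf_nodeA hd h, parentOf_nodeA hd h]
      by_cases hTa : T = a.lab
      · rw [if_pos hTa, hTa, depthOf_lab a, ← lab_node, depthOf_lab]
      · rw [if_neg hTa, depthOf_nodeA hd (parentOf_mem a T), iha hga h hTa]
    · rw [depthOf_nodeB hd h, parentOf_nodeB hd h]
      by_cases hTb : T = b.lab
      · rw [if_pos hTb, hTb, depthOf_lab b, ← lab_node, depthOf_lab]
      · rw [if_neg hTb, depthOf_nodeB hd (parentOf_mem b T), ihb hgb h hTb]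

lemma mem_childPair_iff : ∀ (t : BT V), t.Good → ∀ {S T}, S ∈ t.fam → T ∈ t.fam →
    (T ∈ t.childPair S ↔ (T ≠ t.lab ∧ t.parentOf T = S)) := by
  intro t
  induction t with
  | leaf v =>
    intro _ S T hS hT
    rw [fam, Finset.mem_singleton] at hS hT
    subst hS; subst hT
    simp [childPair, lab]
  | node a b iha ihb =>
    intro hg S T hS hT
    obtain ⟨hd, hga, hgb⟩ := hg
    rw [fam_node, Finset.mem_insert, Finset.mem_union] at hS hT
    rcases hT with hT | hT | hT
    · -- T is the root label: both sides false
      subst hT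
      constructor
      · intro hmem
        exfalso
        rcases hS with hS | hS | hS
        · subst hS
          rw [childPair, if_pos rfl] at hmem
          rcases Finset.mem_insert.1 hmem with h | h
          · exact famA_ne_lab hd (lab_mem_fam a) h.symm
          · exact famB_ne_lab hd (lab_mem_fam b) (Finset.mem_singleton.1 h).symm
        · rw [childPair_nodeA hd hS] at hmem
          exact famA_ne_lab hd (childPair_subset_fam a S hmem) rfl
        · rw [childPair_nodeB hd hS] at hmem
          exact famB_ne_lab hd (childPair_subset_fam b S hmem) rfl
      · rintro ⟨hne, -⟩
        exact absurd rfl hne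
    · -- T in the a-side family
      have hTne : T ≠ (BT.node a b).lab := famA_ne_lab hd hT
      rw [parentOf_nodeA hd hT]
      rcases hS with hS | hS | hS
      · subst hS
        rw [childPair, if_pos rfl]
        by_cases hTa : T = a.lab
        · subst hTa
          rw [if_pos rfl]
          exact ⟨fun _ => ⟨hTne, rfl⟩, fun _ => Finset.mem_insert_self _ _⟩
        · rw [if_neg hTa]
          constructor
          · intro hmem
            exfalso
            rcases Finset.mem_insert.1 hmem with h | h
            · exact hTa h
            · exact famA_ne_labB hd hT (Finset.mem_singleton.1 h)
          · rintro ⟨-, hpar⟩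
            exact absurd hpar (famA_ne_lab hd (parentOf_mem a T))
      · rw [childPair_nodeA hd hS]
        by_cases hTa : T = a.lab
        · rw [if_pos hTa]
          constructor
          · intro hmem
            exact absurd hTa ((iha hga hS hT).1 hmem).1
          · rintro ⟨-, hpar⟩
            exact absurd hpar.symm (famA_ne_lab hd hS)
        · rw [if_neg hTa, iha hga hS hT]
          exact ⟨fun ⟨_, h⟩ => ⟨hTne, h⟩, fun ⟨_, h⟩ => ⟨hTa, h⟩⟩
      · rw [childPair_nodeB hd hS]
        constructor
        · intro hmem
          exact absurd hT (fun h => fam_disjoint hd.symm (childPair_subset_fam b S hmem) h)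
        · rintro ⟨-, hpar⟩
          exfalso
          by_cases hTa : T = a.lab
          · rw [if_pos hTa] at hpar
            exact famB_ne_lab hd hS hpar.symm
          · rw [if_neg hTa] at hpar
            exact fam_disjoint hd (hpar ▸ parentOf_mem a T) hS
    · -- T in the b-side family
      have hTne : T ≠ (BT.node a b).lab := famB_ne_lab hd hT
      rw [parentOf_nodeB hd hT]
      rcases hS with hS | hS | hS
      · subst hS
        rw [childPair, if_pos rfl]
        by_cases hTb : T = b.lab
        · subst hTb
          rw [if_pos rfl]
          refine ⟨fun _ => ⟨hTne, rfl⟩, fun _ => ?_⟩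
          exact Finset.mem_insert.2 (Or.inr (Finset.mem_singleton_self _))
        · rw [if_neg hTb]
          constructor
          · intro hmem
            exfalso
            rcases Finset.mem_insert.1 hmem with h | h
            · exact famA_ne_labB hd.symm hT h
            · exact hTb (Finset.mem_singleton.1 h)
          · rintro ⟨-, hpar⟩
            exact absurd hpar (famB_ne_lab hd (parentOf_mem b T))
      · rw [childPair_nodeA hd hS]
        constructor
        · intro hmem
          exact absurd hT (fun h => fam_disjoint hd (childPair_subset_fam a S hmem) h)
        · rintro ⟨-, hpar⟩
          exfalso
          by_cases hTb : T = b.lab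
          · rw [if_pos hTb] at hpar
            exact famA_ne_lab hd hS hpar.symm
          · rw [if_neg hTb] at hpar
            exact fam_disjoint hd hS (hpar ▸ parentOf_mem b T)
      · rw [childPair_nodeB hd hS]
        by_cases hTb : T = b.lab
        · rw [if_pos hTb]
          constructor
          · intro hmem
            exact absurd hTb ((ihb hgb hS hT).1 hmem).1
          · rintro ⟨-, hpar⟩
            exact absurd hpar.symm (famB_ne_lab hd hS)
        · rw [if_neg hTb, ihb hgb hS hT]
          exact ⟨fun ⟨_, h⟩ => ⟨hTne, h⟩, fun ⟨_, h⟩ => ⟨hTb, h⟩⟩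

end BT
namespace BT

lemma childPair_disjoint : ∀ (t : BT V), t.Good → ∀ (S : Finset V), ∀ T₁ ∈ t.childPair S,
    ∀ T₂ ∈ t.childPair S, T₁ ≠ T₂ → Disjoint T₁ T₂ := by
  intro t
  induction t with
  | leaf v => intro _ S T₁ h₁; rw [childPair] at h₁; exact absurd h₁ (Finset.notMem_empty _)
  | node a b iha ihb =>
    intro hg S T₁ h₁ T₂ h₂ hne
    obtain ⟨hd, hga, hgb⟩ := hg
    rw [childPair] at h₁ h₂
    by_cases hS : S = a.lab ∪ b.lab
    · rw [if_pos hS] at h₁ h₂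
      rcases Finset.mem_insert.1 h₁ with e₁ | e₁ <;>
        rcases Finset.mem_insert.1 h₂ with e₂ | e₂
      · exact absurd (e₁.trans e₂.symm) hne
      · rw [Finset.mem_singleton] at e₂; rw [e₁, e₂]; exact hd
      · rw [Finset.mem_singleton] at e₁; rw [e₁, e₂]; exact hd.symm
      · rw [Finset.mem_singleton] at e₁ e₂; exact absurd (e₁.trans e₂.symm) hne
    · rw [if_neg hS] at h₁ h₂
      by_cases hsub : S ⊆ a.lab
      · rw [if_pos hsub] at h₁ h₂; exact iha hga S T₁ h₁ T₂ h₂ hne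
      · rw [if_neg hsub] at h₁ h₂; exact ihb hgb S T₁ h₁ T₂ h₂ hne

lemma childPair_biUnion : ∀ (t : BT V), t.Good → ∀ {S}, S ∈ t.fam →
    (t.childPair S).Nonempty → (t.childPair S).biUnion id = S := by
  intro t
  induction t with
  | leaf v =>
    intro _ S _ hne
    rw [childPair] at hne
    exact absurd hne Finset.not_nonempty_empty
  | node a b iha ihb =>
    intro hg S hS hne
    obtain ⟨hd, hga, hgb⟩ := hg
    rw [fam_node, Finset.mem_insert, Finset.mem_union] at hS
    rcases hS with hS | hS | hS
    · subst hS
      rw [childPair, if_pos rfl]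
      simp [Finset.biUnion_insert]
    · rw [childPair_nodeA hd hS] at hne ⊢
      exact iha hga hS hne
    · rw [childPair_nodeB hd hS] at hne ⊢
      exact ihb hgb hS hne

lemma childPair_card : ∀ (t : BT V), t.Good → ∀ {S}, S ∈ t.fam →
    (t.childPair S).Nonempty → (t.childPair S).card = 2 := by
  intro t
  induction t with
  | leaf v =>
    intro _ S _ hne
    rw [childPair] at hne
    exact absurd hne Finset.not_nonempty_empty
  | node a b iha ihb =>
    intro hg S hS hne
    obtain ⟨hd, hga, hgb⟩ := hg
    rw [fam_node, Finset.mem_insert, Finset.mem_union] at hS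
    rcases hS with hS | hS | hS
    · subst hS
      rw [childPair, if_pos rfl]
      exact Finset.card_pair (famA_ne_labB hd (lab_mem_fam a))
    · rw [childPair_nodeA hd hS] at hne ⊢
      exact iha hga hS hne
    · rw [childPair_nodeB hd hS] at hne ⊢
      exact ihb hgb hS hne

lemma childPair_empty_singleton : ∀ (t : BT V), t.Good → ∀ {S}, S ∈ t.fam →
    t.childPair S = ∅ → ∃ v, S = {v} := by
  intro t
  induction t with
  | leaf v =>
    intro _ S hS _
    rw [fam, Finset.mem_singleton] at hS
    exact ⟨v, hS⟩
  | node a b iha ihb =>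
    intro hg S hS hemp
    obtain ⟨hd, hga, hgb⟩ := hg
    rw [fam_node, Finset.mem_insert, Finset.mem_union] at hS
    rcases hS with hS | hS | hS
    · subst hS
      rw [childPair, if_pos rfl] at hemp
      exact absurd hemp (Finset.insert_ne_empty _ _)
    · rw [childPair_nodeA hd hS] at hemp
      exact iha hga hS hemp
    · rw [childPair_nodeB hd hS] at hemp
      exact ihb hgb hS hemp

lemma singleton_mem_fam : ∀ (t : BT V) {v}, v ∈ t.lab → {v} ∈ t.fam := by
  intro t
  induction t with
  | leaf w =>
    intro v hv
    rw [lab, Finset.mem_singleton] at hv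
    rw [fam, hv]
    exact Finset.mem_singleton_self _
  | node a b iha ihb =>
    intro v hv
    rw [lab_node, Finset.mem_union] at hv
    rw [fam_node]
    rcases hv with h | h
    · exact Finset.mem_insert.2 (Or.inr (Finset.mem_union_left _ (iha h)))
    · exact Finset.mem_insert.2 (Or.inr (Finset.mem_union_right _ (ihb h)))

lemma childPair_singleton : ∀ (t : BT V), t.Good → ∀ (v : V), t.childPair {v} = ∅ := by
  intro t
  induction t with
  | leaf w => intro _ v; rw [childPair]
  | node a b iha ihb =>
    intro hg v
    obtain ⟨hd, hga, hgb⟩ := hg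
    have hne : ({v} : Finset V) ≠ a.lab ∪ b.lab := by
      intro h
      have ha : a.lab ⊆ {v} := h ▸ Finset.subset_union_left
      have hb : b.lab ⊆ {v} := h ▸ Finset.subset_union_right
      obtain ⟨x, hx⟩ := lab_nonempty a
      obtain ⟨y, hy⟩ := lab_nonempty b
      have hx' := Finset.mem_singleton.1 (ha hx)
      have hy' := Finset.mem_singleton.1 (hb hy)
      subst hx'; subst hy'
      exact Finset.disjoint_left.1 hd hx hy
    rw [childPair, if_neg hne]
    split
    · exact iha hga v
    · exact ihb hgb v

/-- Sum of entropy terms over all non-root labels equals the recursive cost. -/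
lemma sum_fam_cost (W : V → V → ℝ) : ∀ (t : BT V), t.Good →
    ∑ S ∈ t.fam.filter (· ≠ t.lab), ent W S (t.parentOf S) = t.cost W := by
  intro t
  induction t with
  | leaf v =>
    intro _
    rw [cost, fam]
    rw [Finset.filter_singleton, if_neg (by simp [lab])]
    exact Finset.sum_empty
  | node a b iha ihb =>
    intro hg
    obtain ⟨hd, hga, hgb⟩ := hg
    have hsplit : (BT.node a b).fam.filter (· ≠ (BT.node a b).lab) = a.fam ∪ b.fam := by
      rw [fam_node]
      rw [Finset.filter_insert, if_neg (by simp [lab_node])]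
      rw [Finset.filter_true_of_mem]
      intro S hS
      rcases Finset.mem_union.1 hS with h | h
      · exact famA_ne_lab hd h
      · exact famB_ne_lab hd h
    rw [hsplit, Finset.sum_union (Finset.disjoint_left.2 (fun S hS => fam_disjoint hd hS))]
    have hA : ∑ S ∈ a.fam, ent W S ((BT.node a b).parentOf S) =
        ent W a.lab (a.lab ∪ b.lab) + a.cost W := by
      rw [← Finset.add_sum_erase _ _ (lab_mem_fam a)]
      congr 1
      · rw [parentOf_nodeA hd (lab_mem_fam a), if_pos rfl]
      · rw [← iha hga, ← Finset.filter_ne']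
        refine Finset.sum_congr rfl fun S hS => ?_
        obtain ⟨hS1, hS2⟩ := Finset.mem_filter.1 hS
        rw [parentOf_nodeA hd hS1, if_neg hS2]
    have hB : ∑ S ∈ b.fam, ent W S ((BT.node a b).parentOf S) =
        ent W b.lab (a.lab ∪ b.lab) + b.cost W := by
      rw [← Finset.add_sum_erase _ _ (lab_mem_fam b)]
      congr 1
      · rw [parentOf_nodeB hd (lab_mem_fam b), if_pos rfl]
      · rw [← ihb hgb, ← Finset.filter_ne']
        refine Finset.sum_congr rfl fun S hS => ?_
        obtain ⟨hS1, hS2⟩ := Finset.mem_filter.1 hS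
        rw [parentOf_nodeB hd hS1, if_neg hS2]
    rw [hA, hB, cost]
    ring

end BT
namespace BT

variable (t : BT V)

/-- Node handle for the label family. -/
noncomputable def ndLab (i : Fin t.fam.card) : Finset V := (t.fam.equivFin.symm i).1

lemma ndLab_mem (i : Fin t.fam.card) : t.ndLab i ∈ t.fam := (t.fam.equivFin.symm i).2

/-- Node of a given family label. -/
noncomputable def ndOf (S : Finset V) (h : S ∈ t.fam) : Fin t.fam.card :=
  t.fam.equivFin ⟨S, h⟩

lemma ndLab_ndOf {S : Finset V} (h : S ∈ t.fam) : t.ndLab (t.ndOf S h) = S := by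
  rw [ndLab, ndOf, Equiv.symm_apply_apply]

lemma eq_ndOf_iff {i : Fin t.fam.card} {S : Finset V} {h : S ∈ t.fam} :
    i = t.ndOf S h ↔ t.ndLab i = S := by
  constructor
  · rintro rfl; exact ndLab_ndOf t h
  · intro hL
    subst hL
    have heq : (⟨t.ndLab i, h⟩ : {x // x ∈ t.fam}) = t.fam.equivFin.symm i :=
      Subtype.ext rfl
    rw [ndOf, heq, Equiv.apply_symm_apply]

lemma ndOf_ndLab (i : Fin t.fam.card) : t.ndOf (t.ndLab i) (ndLab_mem t i) = i :=
  ((eq_ndOf_iff t).2 rfl).symm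

lemma ndLab_inj {i j : Fin t.fam.card} (h : t.ndLab i = t.ndLab j) : i = j :=
  ((eq_ndOf_iff t (h := ndLab_mem t j)).2 h).trans (ndOf_ndLab t j)

/-- The partitioning tree associated with a good binary tree covering all vertices. -/
noncomputable def toPartTree (hg : t.Good) (hlab : t.lab = Finset.univ) :
    PartTree V where
  Node := Fin t.fam.card
  fin := inferInstance
  deq := inferInstance
  root := t.ndOf t.lab (lab_mem_fam t)
  parent := fun i => t.ndOf (t.parentOf (t.ndLab i)) (parentOf_mem t _)
  depth := fun i => t.depthOf (t.ndLab i)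
  depth_root := by simp only [ndLab_ndOf]; exact depthOf_lab t
  depth_parent := by
    intro α hα
    simp only [ndLab_ndOf]
    exact depthOf_parent t hg (ndLab_mem t α) (fun h => hα ((eq_ndOf_iff t).2 h))
  label := fun i => t.ndLab i
  label_root := by simp only [ndLab_ndOf]; exact hlab
  label_nonempty := fun i => mem_fam_nonempty t (ndLab_mem t i)
  label_children := by
    intro β hne
    have key : ∀ α : Fin t.fam.card,
        (α ≠ t.ndOf t.lab (lab_mem_fam t) ∧
          t.ndOf (t.parentOf (t.ndLab α)) (parentOf_mem t _) = β) ↔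
          t.ndLab α ∈ t.childPair (t.ndLab β) := by
      intro α
      rw [mem_childPair_iff t hg (ndLab_mem t β) (ndLab_mem t α)]
      constructor
      · rintro ⟨h1, h2⟩
        exact ⟨fun h => h1 ((eq_ndOf_iff t).2 h), ((eq_ndOf_iff t).1 h2.symm).symm⟩
      · rintro ⟨h1, h2⟩
        exact ⟨fun h => h1 ((eq_ndOf_iff t).1 h), ((eq_ndOf_iff t).2 h2.symm).symm⟩
    obtain ⟨α₀, hα₀⟩ := hne
    have hcp : (t.childPair (t.ndLab β)).Nonempty :=
      ⟨t.ndLab α₀, (key α₀).1 (Finset.mem_filter.1 hα₀).2⟩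
    have hbi := childPair_biUnion t hg (ndLab_mem t β) hcp
    show t.ndLab β = _
    ext x
    rw [Finset.mem_biUnion]
    constructor
    · intro hx
      have hx' : x ∈ (t.childPair (t.ndLab β)).biUnion id := by rw [hbi]; exact hx
      obtain ⟨S, hS, hxS⟩ := Finset.mem_biUnion.1 hx'
      have hSfam : S ∈ t.fam := childPair_subset_fam t _ hS
      refine ⟨t.ndOf S hSfam, ?_, ?_⟩
      · refine Finset.mem_filter.2 ⟨Finset.mem_univ _, (key _).2 ?_⟩
        rw [ndLab_ndOf]
        exact hS
      · show x ∈ t.ndLab (t.ndOf S hSfam)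
        rw [ndLab_ndOf]
        exact hxS
    · rintro ⟨α, hα, hxα⟩
      have hS : t.ndLab α ∈ t.childPair (t.ndLab β) := (key α).1 (Finset.mem_filter.1 hα).2
      rw [← hbi]
      exact Finset.mem_biUnion.2 ⟨t.ndLab α, hS, hxα⟩
  label_disjoint := by
    intro α β hα hβ hpar hne
    have hpar' : t.parentOf (t.ndLab α) = t.parentOf (t.ndLab β) := by
      have h1 := (eq_ndOf_iff t).1 hpar.symm
      rw [ndLab_ndOf] at h1
      exact h1.symm
    have hmemα : t.ndLab α ∈ t.childPair (t.parentOf (t.ndLab α)) :=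
      (mem_childPair_iff t hg (parentOf_mem t _) (ndLab_mem t α)).2
        ⟨fun h => hα ((eq_ndOf_iff t).2 h), rfl⟩
    have hmemβ : t.ndLab β ∈ t.childPair (t.parentOf (t.ndLab α)) :=
      (mem_childPair_iff t hg (parentOf_mem t _) (ndLab_mem t β)).2
        ⟨fun h => hβ ((eq_ndOf_iff t).2 h), hpar'.symm⟩
    exact childPair_disjoint t hg _ _ hmemα _ hmemβ (fun h => hne (ndLab_inj t h))
  leaf_label := by
    intro α hemp
    refine childPair_empty_singleton t hg (ndLab_mem t α) ?_
    rw [Finset.eq_empty_iff_forall_notMem]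
    intro S hS
    have hSfam : S ∈ t.fam := childPair_subset_fam t _ hS
    have hmm := (mem_childPair_iff t hg (ndLab_mem t α) hSfam).1 hS
    have hmem : t.ndOf S hSfam ∈
        Finset.univ.filter (fun γ : Fin t.fam.card =>
          γ ≠ t.ndOf t.lab (lab_mem_fam t) ∧
          t.ndOf (t.parentOf (t.ndLab γ)) (parentOf_mem t _) = α) := by
      refine Finset.mem_filter.2 ⟨Finset.mem_univ _, ?_, ?_⟩
      · intro h
        have := (eq_ndOf_iff t).1 h
        rw [ndLab_ndOf] at this
        exact hmm.1 this
      · refine ((eq_ndOf_iff t).2 ?_).symm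
        simp only [ndLab_ndOf]
        exact hmm.2.symm
    rw [hemp] at hmem
    exact Finset.notMem_empty _ hmem
  leaf_unique := by
    intro v
    have hv : {v} ∈ t.fam := singleton_mem_fam t (hlab ▸ Finset.mem_univ v)
    refine ⟨t.ndOf {v} hv, ⟨?_, ndLab_ndOf t hv⟩, ?_⟩
    · rw [Finset.eq_empty_iff_forall_notMem]
      intro γ hγ
      have h := (Finset.mem_filter.1 hγ).2
      have hpar : t.parentOf (t.ndLab γ) = {v} := by
        have := (eq_ndOf_iff t).1 h.2
        rw [ndLab_ndOf] at this
        exact this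
      have hmem : t.ndLab γ ∈ t.childPair ({v} : Finset V) :=
        (mem_childPair_iff t hg hv (ndLab_mem t γ)).2
          ⟨fun h' => h.1 ((eq_ndOf_iff t).2 h'), hpar⟩
      rw [childPair_singleton t hg v] at hmem
      exact Finset.notMem_empty _ hmem
    · rintro β ⟨-, hβ⟩
      exact (eq_ndOf_iff t).2 hβ

end BT
namespace BT

lemma toPartTree_children_iff (t : BT V) (hg : t.Good) (hlab : t.lab = Finset.univ)
    (β α : Fin t.fam.card) :
    α ∈ (t.toPartTree hg hlab).children β ↔ t.ndLab α ∈ t.childPair (t.ndLab β) := by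
  refine (@Finset.mem_filter (t.toPartTree hg hlab).Node _ (fun _ => @instDecidableAnd _ _
    (@instDecidableNot _ ((t.toPartTree hg hlab).deq _ _)) ((t.toPartTree hg hlab).deq _ _))
    Finset.univ α).trans ?_
  rw [mem_childPair_iff t hg (ndLab_mem t β) (ndLab_mem t α)]
  constructor
  · rintro ⟨-, h1, h2⟩
    exact ⟨fun h => h1 ((eq_ndOf_iff t).2 h), ((eq_ndOf_iff t).1 h2.symm).symm⟩
  · rintro ⟨h1, h2⟩
    exact ⟨Finset.mem_univ _, fun h => h1 ((eq_ndOf_iff t).1 h),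
      ((eq_ndOf_iff t).2 h2.symm).symm⟩

lemma toPartTree_isBinary (t : BT V) (hg : t.Good) (hlab : t.lab = Finset.univ) :
    (t.toPartTree hg hlab).isBinary := by
  intro β hne
  have himg : ((t.toPartTree hg hlab).children β).image (t.ndLab) =
      t.childPair (t.ndLab β) := by
    ext S
    constructor
    · intro hS
      obtain ⟨α, hα, rfl⟩ := Finset.mem_image.1 hS
      exact (toPartTree_children_iff t hg hlab β α).1 hα
    · intro hS
      have hSfam : S ∈ t.fam := childPair_subset_fam t _ hS
      refine Finset.mem_image.2 ⟨t.ndOf S hSfam, ?_, ndLab_ndOf t hSfam⟩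
      erw [toPartTree_children_iff t hg hlab, ndLab_ndOf]
      exact hS
  have hcard : ((t.toPartTree hg hlab).children β).card = (t.childPair (t.ndLab β)).card := by
    rw [← himg]
    exact (Finset.card_image_of_injective _ (fun i j h => ndLab_inj t h)).symm
  rw [hcard]
  refine childPair_card t hg (ndLab_mem t β) ?_
  obtain ⟨α, hα⟩ := hne
  exact ⟨t.ndLab α, (toPartTree_children_iff t hg hlab β α).1 hα⟩

lemma SE_toPartTree (W : V → V → ℝ) (t : BT V) (hg : t.Good)
    (hlab : t.lab = Finset.univ) : SE W (t.toPartTree hg hlab) = t.cost W := by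
  rw [SE, ← sum_fam_cost W t hg]
  refine Finset.sum_bij (fun α _ => t.ndLab α) ?_ ?_ ?_ ?_
  · intro α hα
    refine Finset.mem_filter.2 ⟨ndLab_mem t α, fun h => ?_⟩
    exact (Finset.mem_filter.1 hα).2 ((eq_ndOf_iff t).2 h)
  · intro α _ β _ h
    exact ndLab_inj t h
  · intro S hS
    obtain ⟨h1, h2⟩ := Finset.mem_filter.1 hS
    refine ⟨t.ndOf S h1, Finset.mem_filter.2 ⟨Finset.mem_univ _, fun h => ?_⟩,
      ndLab_ndOf t h1⟩
    have := (eq_ndOf_iff t).1 h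
    rw [ndLab_ndOf] at this
    exact h2 this
  · intro α _
    show -(cut W (t.ndLab α) / vol W Finset.univ) *
        Real.logb 2 (vol W (t.ndLab α) /
          vol W (t.ndLab (t.ndOf (t.parentOf (t.ndLab α)) (parentOf_mem t _)))) =
        ent W (t.ndLab α) (t.parentOf (t.ndLab α))
    rw [ndLab_ndOf t (parentOf_mem t _), ent]

end BT

/-- An optimal binary tree on the subset `S`. -/
noncomputable def optBT (W : V → V → ℝ) : (S : Finset V) → S.Nonempty → BT V :=
  fun S hS =>
  if h : 2 ≤ S.card then
    BT.node
      (optBT W (Classical.choose (OPT_spec W h))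
        (mem_pns.1 (Classical.choose_spec (OPT_spec W h)).1).2.1)
      (optBT W (S \ Classical.choose (OPT_spec W h))
        (Finset.sdiff_nonempty.2 fun hsub =>
          (mem_pns.1 (Classical.choose_spec (OPT_spec W h)).1).2.2
            (Finset.Subset.antisymm (mem_pns.1 (Classical.choose_spec (OPT_spec W h)).1).1
              hsub)))
  else BT.leaf hS.choose
termination_by S _ => S.card
decreasing_by
  all_goals
    first
    | exact Finset.card_lt_card (Finset.ssubset_iff_subset_ne.2
        ⟨(mem_pns.1 (Classical.choose_spec (OPT_spec W h)).1).1,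
         (mem_pns.1 (Classical.choose_spec (OPT_spec W h)).1).2.2⟩)
    | exact Finset.card_lt_card (Finset.sdiff_ssubset
        (mem_pns.1 (Classical.choose_spec (OPT_spec W h)).1).1
        (mem_pns.1 (Classical.choose_spec (OPT_spec W h)).1).2.1)

lemma optBT_spec (W : V → V → ℝ) :
    ∀ (n : ℕ) (S : Finset V) (hS : S.Nonempty), S.card ≤ n →
      (optBT W S hS).lab = S ∧ (optBT W S hS).Good ∧
        (optBT W S hS).cost W = OPT W S := by
  intro n
  induction n using Nat.strong_induction_on with
  | _ n ih =>
    intro S hS hn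
    by_cases h : 2 ≤ S.card
    · rw [optBT, dif_pos h]
      set A := Classical.choose (OPT_spec W h) with hA
      have hspec := Classical.choose_spec (OPT_spec W h)
      obtain ⟨hApns, hOPT⟩ := hspec
      obtain ⟨hAsub, hAne, hAneS⟩ := mem_pns.1 hApns
      have hcardA : A.card < S.card :=
        Finset.card_lt_card (Finset.ssubset_iff_subset_ne.2 ⟨hAsub, hAneS⟩)
      have hcardD : (S \ A).card < S.card :=
        Finset.card_lt_card (Finset.sdiff_ssubset hAsub hAne)
      have hScard : 1 ≤ S.card := Finset.one_le_card.2 hS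
      obtain ⟨ihA1, ihA2, ihA3⟩ := ih (n-1) (by omega) A _ (by omega)
      obtain ⟨ihD1, ihD2, ihD3⟩ := ih (n-1) (by omega) (S \ A) _ (by omega)
      refine ⟨?_, ⟨?_, ihA2, ihD2⟩, ?_⟩
      · rw [BT.lab_node, ihA1, ihD1, Finset.union_sdiff_of_subset hAsub]
      · rw [ihA1, ihD1]; exact Finset.disjoint_sdiff
      · rw [BT.cost, ihA1, ihD1, Finset.union_sdiff_of_subset hAsub, ihA3, ihD3, hOPT]
    · rw [optBT, dif_neg h]
      obtain ⟨a, ha⟩ := Finset.card_eq_one.1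
        (by have := Finset.one_le_card.2 hS; omega : S.card = 1)
      have hchoose : hS.choose = a :=
        Finset.mem_singleton.1 (by rw [← ha]; exact hS.choose_spec)
      refine ⟨?_, trivial, ?_⟩
      · rw [BT.lab, hchoose, ha]
      · rw [BT.cost, OPT_of_card_le W (by omega)]
section Lower

/-- Descendant relation in a partitioning tree, via parent iteration. -/
def isDesc (T : PartTree V) (β α : T.Node) : Prop :=
  T.depth β ≤ T.depth α ∧ T.parent^[T.depth α - T.depth β] α = β

instance (T : PartTree V) (β α : T.Node) : Decidable (isDesc T β α) := by
  unfold isDesc; infer_instance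

lemma root_of_depth_zero (T : PartTree V) {α : T.Node} (h : T.depth α = 0) :
    α = T.root := by
  by_contra hne
  have := T.depth_parent α hne
  omega

lemma iterate_depth (T : PartTree V) :
    ∀ (k : ℕ) (α : T.Node), k ≤ T.depth α →
      T.depth (T.parent^[k] α) = T.depth α - k := by
  intro k
  induction k with
  | zero => intro α _; simp
  | succ k ihk =>
    intro α hk
    rw [Function.iterate_succ_apply']
    have h1 : T.depth (T.parent^[k] α) = T.depth α - k := ihk α (by omega)
    have h2 : T.parent^[k] α ≠ T.root := by
      intro h
      rw [h, T.depth_root] at h1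
      omega
    have := T.depth_parent _ h2
    omega

lemma isDesc_self (T : PartTree V) (β : T.Node) : isDesc T β β :=
  ⟨le_rfl, by simp⟩

lemma isDesc_root (T : PartTree V) (α : T.Node) : isDesc T T.root α := by
  have h0 : T.depth T.root = 0 := T.depth_root
  refine ⟨by omega, ?_⟩
  apply root_of_depth_zero
  rw [iterate_depth T _ _ (by omega)]
  omega

lemma children_depth (T : PartTree V) {β c : T.Node} (hc : c ∈ T.children β) :
    T.depth c = T.depth β + 1 := by
  obtain ⟨-, h1, h2⟩ := Finset.mem_filter.1 hc
  rw [T.depth_parent c h1, h2]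

lemma isDesc_of_child (T : PartTree V) {β c α : T.Node} (hc : c ∈ T.children β)
    (hα : isDesc T c α) : isDesc T β α ∧ α ≠ β := by
  obtain ⟨-, h1, h2⟩ := Finset.mem_filter.1 hc
  have hdc : T.depth c = T.depth β + 1 := children_depth T hc
  have hle : T.depth β ≤ T.depth α := by have := hα.1; omega
  refine ⟨⟨hle, ?_⟩, ?_⟩
  · have harith : T.depth α - T.depth β = (T.depth α - T.depth c) + 1 := by
      have := hα.1; omega
    rw [harith, Function.iterate_succ_apply', hα.2, h2]
  · intro h
    subst h
    have := hα.1
    omega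

lemma child_of_isDesc (T : PartTree V) {β α : T.Node} (hα : isDesc T β α)
    (hne : α ≠ β) :
    T.parent^[T.depth α - T.depth β - 1] α ∈ T.children β ∧
      isDesc T (T.parent^[T.depth α - T.depth β - 1] α) α := by
  have hlt : T.depth β < T.depth α := by
    rcases Nat.lt_or_ge (T.depth β) (T.depth α) with h | h
    · exact h
    · exfalso
      have heq : T.depth α = T.depth β := le_antisymm h hα.1
      have := hα.2
      rw [heq, Nat.sub_self] at this
      exact hne this
  set k := T.depth α - T.depth β - 1 with hk
  have hkle : k ≤ T.depth α := by omega
  have hcd : T.depth (T.parent^[k] α) = T.depth β + 1 := by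
    rw [iterate_depth T k α hkle]; omega
  have hcroot : T.parent^[k] α ≠ T.root := by
    intro h
    rw [h, T.depth_root] at hcd
    omega
  have hpc : T.parent (T.parent^[k] α) = β := by
    have h1 : T.parent^[k+1] α = β := by
      rw [show k + 1 = T.depth α - T.depth β by omega]
      exact hα.2
    rw [← h1, Function.iterate_succ_apply']
  refine ⟨Finset.mem_filter.2 ⟨Finset.mem_univ _, hcroot, hpc⟩, ?_, ?_⟩
  · omega
  · rw [hcd, show T.depth α - (T.depth β + 1) = k by omega]

lemma isDesc_child_unique (T : PartTree V) {β c c' α : T.Node}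
    (hc : c ∈ T.children β) (hc' : c' ∈ T.children β)
    (h1 : isDesc T c α) (h2 : isDesc T c' α) : c = c' := by
  have hd1 : T.depth c = T.depth β + 1 := children_depth T hc
  have hd2 : T.depth c' = T.depth β + 1 := children_depth T hc'
  have e1 : T.parent^[T.depth α - (T.depth β + 1)] α = c := by rw [← hd1]; exact h1.2
  have e2 : T.parent^[T.depth α - (T.depth β + 1)] α = c' := by rw [← hd2]; exact h2.2
  exact e1.symm.trans e2

end Lower
section Main

/-- Total entropy contribution of the strict descendants of a node. -/
noncomputable def subSum (W : V → V → ℝ) (T : PartTree V) (β : T.Node) : ℝ :=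
  ∑ α ∈ Finset.univ.filter (fun α => isDesc T β α ∧ α ≠ β),
    ent W (T.label α) (T.label (T.parent α))

lemma OPT_le_subSum (W : V → V → ℝ) (hnonneg : ∀ i j, 0 ≤ W i j)
    (hdeg : ∀ i, 0 < deg W i) (T : PartTree V) :
    ∀ (n : ℕ) (β : T.Node),
      (Finset.univ.filter (fun α => isDesc T β α)).card ≤ n →
      OPT W (T.label β) ≤ subSum W T β := by
  intro n
  induction n using Nat.strong_induction_on with
  | _ n ih =>
    intro β hn
    by_cases hch : (T.children β).Nonempty
    · -- internal node
      have hsplit : Finset.univ.filter (fun α => isDesc T β α ∧ α ≠ β) =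
          (T.children β).biUnion
            (fun c => Finset.univ.filter (fun α => isDesc T c α)) := by
        ext α
        simp only [Finset.mem_filter, Finset.mem_biUnion, Finset.mem_univ, true_and]
        constructor
        · rintro ⟨h1, h2⟩
          obtain ⟨hc, hd⟩ := child_of_isDesc T h1 h2
          exact ⟨_, hc, hd⟩
        · rintro ⟨c, hc, hd⟩
          exact isDesc_of_child T hc hd
      have hdisjP : (↑(T.children β) : Set T.Node).PairwiseDisjoint
          (fun c => Finset.univ.filter (fun α => isDesc T c α)) := by
        intro c hc c' hc' hne
        refine Finset.disjoint_left.2 fun α hα hα' => ?_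
        exact hne (isDesc_child_unique T (Finset.mem_coe.1 hc) (Finset.mem_coe.1 hc')
          (Finset.mem_filter.1 hα).2 (Finset.mem_filter.1 hα').2)
      have hsum : subSum W T β =
          ∑ c ∈ T.children β, (ent W (T.label c) (T.label β) + subSum W T c) := by
        rw [subSum, hsplit, Finset.sum_biUnion hdisjP]
        refine Finset.sum_congr rfl fun c hc => ?_
        have hins : Finset.univ.filter (fun α => isDesc T c α) =
            insert c (Finset.univ.filter (fun α => isDesc T c α ∧ α ≠ c)) := by
          ext α
          simp only [Finset.mem_insert, Finset.mem_filter, Finset.mem_univ, true_and]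
          constructor
          · intro h
            by_cases hac : α = c
            · exact Or.inl hac
            · exact Or.inr ⟨h, hac⟩
          · rintro (rfl | ⟨h, -⟩)
            · exact isDesc_self T _
            · exact h
        rw [hins, Finset.sum_insert (fun h => ((Finset.mem_filter.1 h).2).2 rfl)]
        obtain ⟨-, -, hpc⟩ := Finset.mem_filter.1 hc
        rw [hpc, subSum]
      set P := (T.children β).image T.label with hP
      have hinj : ∀ c ∈ T.children β, ∀ c' ∈ T.children β,
          T.label c = T.label c' → c = c' := by
        intro c hc c' hc' heq
        by_contra hne
        obtain ⟨-, h1, h2⟩ := Finset.mem_filter.1 hc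
        obtain ⟨-, h1', h2'⟩ := Finset.mem_filter.1 hc'
        have hdisj := T.label_disjoint c c' h1 h1' (h2.trans h2'.symm) hne
        obtain ⟨x, hx⟩ := T.label_nonempty c
        exact Finset.disjoint_left.1 hdisj hx (heq ▸ hx)
      have hOPTle : OPT W (T.label β) ≤ ∑ A ∈ P, (ent W A (T.label β) + OPT W A) := by
        refine OPT_le_partition W hnonneg hdeg P.card P (T.label β) rfl
          (hch.image _) ?_ ?_ ?_
        · intro A hA
          obtain ⟨c, hc, rfl⟩ := Finset.mem_image.1 hA
          exact T.label_nonempty c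
        · intro A hA B hB hAB
          obtain ⟨c, hc, rfl⟩ := Finset.mem_image.1 (Finset.mem_coe.1 hA)
          obtain ⟨c', hc', rfl⟩ := Finset.mem_image.1 (Finset.mem_coe.1 hB)
          obtain ⟨-, h1, h2⟩ := Finset.mem_filter.1 hc
          obtain ⟨-, h1', h2'⟩ := Finset.mem_filter.1 hc'
          exact T.label_disjoint c c' h1 h1' (h2.trans h2'.symm)
            (fun h => hAB (congrArg T.label h))
        · rw [hP, Finset.image_biUnion]
          exact (T.label_children β hch).symm
      have hsum_image : ∑ A ∈ P, (ent W A (T.label β) + OPT W A) =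
          ∑ c ∈ T.children β, (ent W (T.label c) (T.label β) + OPT W (T.label c)) :=
        Finset.sum_image hinj
      have hIH : ∀ c ∈ T.children β, OPT W (T.label c) ≤ subSum W T c := by
        intro c hc
        refine ih (Finset.univ.filter (fun α => isDesc T c α)).card ?_ c le_rfl
        have hsub : Finset.univ.filter (fun α => isDesc T c α) ⊆
            Finset.univ.filter (fun α => isDesc T β α) := by
          intro α hα
          exact Finset.mem_filter.2 ⟨Finset.mem_univ _,
            (isDesc_of_child T hc (Finset.mem_filter.1 hα).2).1⟩
        have hβmem : β ∈ Finset.univ.filter (fun α => isDesc T β α) :=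
          Finset.mem_filter.2 ⟨Finset.mem_univ _, isDesc_self T β⟩
        have hβnot : β ∉ Finset.univ.filter (fun α => isDesc T c α) := by
          intro h
          have h1 := ((Finset.mem_filter.1 h).2).1
          have h2 := children_depth T hc
          omega
        have hlt : (Finset.univ.filter (fun α => isDesc T c α)).card <
            (Finset.univ.filter (fun α => isDesc T β α)).card :=
          Finset.card_lt_card ((Finset.ssubset_iff_of_subset hsub).2 ⟨β, hβmem, hβnot⟩)
        omega
      calc OPT W (T.label β)
          ≤ ∑ c ∈ T.children β, (ent W (T.label c) (T.label β) + OPT W (T.label c)) :=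
            hOPTle.trans_eq hsum_image
        _ ≤ ∑ c ∈ T.children β, (ent W (T.label c) (T.label β) + subSum W T c) :=
            Finset.sum_le_sum fun c hc => by have := hIH c hc; linarith
        _ = subSum W T β := hsum.symm
    · -- leaf node
      have hemp : T.children β = ∅ := Finset.not_nonempty_iff_eq_empty.1 hch
      obtain ⟨v, hv⟩ := T.leaf_label β hemp
      have hOPT0 : OPT W (T.label β) = 0 :=
        OPT_of_card_le W (by rw [hv, Finset.card_singleton])
      have hsub0 : Finset.univ.filter (fun α => isDesc T β α ∧ α ≠ β) = ∅ := by
        rw [Finset.eq_empty_iff_forall_notMem]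
        intro α hα
        obtain ⟨h1, h2⟩ := (Finset.mem_filter.1 hα).2
        obtain ⟨hc, -⟩ := child_of_isDesc T h1 h2
        rw [hemp] at hc
        exact Finset.notMem_empty _ hc
      rw [hOPT0, subSum, hsub0, Finset.sum_empty]

lemma subSum_root (W : V → V → ℝ) (T : PartTree V) : subSum W T T.root = SE W T := by
  rw [subSum, SE]
  refine Finset.sum_congr ?_ (fun _ _ => rfl)
  ext α
  simp only [Finset.mem_filter, Finset.mem_univ, true_and]
  exact ⟨fun h => h.2, fun h => ⟨isDesc_root T α, h⟩⟩

end Main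



/-- For a finite weighted undirected graph with at least two vertices and
positive degrees, there is a binary partitioning tree `T*` whose structural entropy is at
most that of every partitioning tree of the graph: the minimum structural entropy is
attained by a binary partitioning tree. -/
theorem exists_binary_tree_min_structural_entropy
    {V : Type*} [Fintype V] [DecidableEq V] (W : V → V → ℝ)
    (hsymm : ∀ i j, W i j = W j i) (hnonneg : ∀ i j, 0 ≤ W i j)
    (hdiag : ∀ i, W i i = 0)
    (hcard : 2 ≤ Fintype.card V) (hdeg : ∀ i, 0 < deg W i) :
    ∃ Tstar : PartTree V, Tstar.isBinary ∧ ∀ T : PartTree V, SE W Tstar ≤ SE W T := by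
  have hne : Nonempty V := Fintype.card_pos_iff.1 (by omega)
  have hVne : (Finset.univ : Finset V).Nonempty := Finset.univ_nonempty
  obtain ⟨hlab, hg, hcost⟩ :=
    optBT_spec W (Finset.univ : Finset V).card Finset.univ hVne le_rfl
  refine ⟨(optBT W Finset.univ hVne).toPartTree hg hlab,
    BT.toPartTree_isBinary _ hg hlab, ?_⟩
  intro T
  rw [BT.SE_toPartTree W _ hg hlab, hcost]
  calc OPT W Finset.univ = OPT W (T.label T.root) := by rw [T.label_root]
    _ ≤ subSum W T T.root := OPT_le_subSum W hnonneg hdeg T _ T.root le_rfl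
    _ = SE W T := subSum_root W T
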